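/- Let α ∈ (0,1), ν ∈ ℕ with 2ν > 1/(1-α). For any M ≥ 1 and m ∈ ℕ, (1/(2M)) ∫_{-M}^{M} |(K_{α,ν}(x + 2^{-2νm-1}) - K_{α,ν}(x))/2^{-2νm-1}| dx ≥ (1/4) ((2^{2ν(1-α)} - 2)/(2^{2ν(1-α)} - 1)) (2^{2ν(1-α)})^m. -/

import Mathlib

/-- The sawtooth function: φ(x) = |x| on [-1,1], extended 2-periodically. -/
noncomputable def phi (x : ℝ) : ℝ := |x - 2 * round (x / 2)|

/-- The Knopp-type function K_{α,ν}. -/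
noncomputable def Kfun (α : ℝ) (ν : ℕ) (x : ℝ) : ℝ :=
  ∑' k : ℕ, (2 : ℝ) ^ (-(2 * α * (ν : ℝ) * (k : ℝ))) * phi ((2 : ℝ) ^ (2 * ν * k) * x)

/-!
Write `Kfun α ν = Σ rᵏ φ(bᵏ x)` with `r = 2^(-2αν)`, `b = 4^ν`, so that `L = 2^(2ν(1-α)) = b r`, and
let `t = 1 / (2 bᵐ)`. Since `4 ∣ b`, `bᵏ t` is an even integer for `k > m`, so these terms do not
change under `x ↦ x ± t`. The `m`-th term is `rᵐ φ(bᵐ x)`, and `φ` changes by exactly `1/2` under a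
half step in at least one direction, which contributes `rᵐ / 2 = Lᵐ t`; by the Lipschitz bound the
terms `k < m` contribute at most `Σ Lᵏ t`. Hence at every `x` the difference quotient at `x` or at
`x - t` is at least `c = (L-2)/(L-1) Lᵐ`. Integrating `min (f x) c + min (f (x - t)) c ≥ c` over
`[-M, M]` gives `2 ∫ f ≥ c (2M - t)`.
-/

open Finset

lemma phi_nonneg (x : ℝ) : 0 ≤ phi x := abs_nonneg _

lemma abs_sub_two_mul_eq_two_mul_abs (x y : ℝ) : |x - 2 * y| = 2 * |x / 2 - y| := by
  rw [← abs_two, ← abs_mul]; ring_nf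

lemma phi_le_one (x : ℝ) : phi x ≤ 1 := by
  rw [phi, abs_sub_two_mul_eq_two_mul_abs]; linarith [abs_sub_round (x / 2)]

lemma phi_le_abs_sub_two_mul_intCast (x : ℝ) (n : ℤ) : phi x ≤ |x - 2 * n| := by
  rw [phi, abs_sub_two_mul_eq_two_mul_abs, abs_sub_two_mul_eq_two_mul_abs]
  linarith [round_le (x / 2) n]

lemma lipschitzWith_one_phi : LipschitzWith 1 phi :=
  LipschitzWith.of_le_add fun x y =>
    calc phi x ≤ |x - 2 * round (y / 2)| := phi_le_abs_sub_two_mul_intCast x _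
      _ ≤ |x - y| + phi y := abs_sub_le x y _
      _ = phi y + dist x y := by rw [Real.dist_eq, add_comm]

lemma phi_add_two_mul_intCast (x : ℝ) (n : ℤ) : phi (x + 2 * n) = phi x := by
  rw [phi, phi, show (x + 2 * n) / 2 = x / 2 + n by ring, round_add_intCast]
  push_cast; ring_nf

lemma phi_eq_abs {x : ℝ} (hx : |x| ≤ 1) : phi x = |x| := by
  refine le_antisymm (by simpa using phi_le_abs_sub_two_mul_intCast x 0) ?_
  rcases eq_or_ne (round (x / 2)) 0 with h | h
  · simp [phi, h]
  · have : (1 : ℝ) ≤ |(round (x / 2) : ℝ)| := by exact_mod_cast Int.one_le_abs h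
    have := abs_sub_abs_le_abs_sub (2 * (round (x / 2) : ℝ)) x
    rw [abs_mul, abs_two, abs_sub_comm] at this
    rw [phi]; linarith

lemma abs_phi_add_half_sub_phi_or (y : ℝ) :
    |phi (y + 1 / 2) - phi y| = 1 / 2 ∨ |phi (y + -1 / 2) - phi y| = 1 / 2 := by
  set d := y - 2 * round (y / 2)
  have hshift (c : ℝ) : phi (y + c) = phi (d + c) := by
    rw [← phi_add_two_mul_intCast (d + c) (round (y / 2))]; congr 1; ring
  have hd : |d| ≤ 1 := phi_le_one y
  rw [hshift, hshift, show phi y = |d| from rfl]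
  rw [abs_le] at hd
  have habs {s : ℝ} (h₁ : -1 ≤ d + s) (h₂ : d + s ≤ 1) : phi (d + s) = |d + s| :=
    phi_eq_abs (abs_le.2 ⟨h₁, h₂⟩)
  rcases le_total d 0 with h0 | h0
  · rcases le_total d (-1 / 2) with h1 | h1
    · left
      rw [habs (by linarith) (by linarith), abs_of_nonpos (by linarith : d + 1 / 2 ≤ 0),
        abs_of_nonpos h0]
      norm_num
    · right
      rw [habs (by linarith) (by linarith), abs_of_nonpos (by linarith : d + -1 / 2 ≤ 0),
        abs_of_nonpos h0]
      norm_num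
  · rcases le_total d (1 / 2) with h1 | h1
    · left
      rw [habs (by linarith) (by linarith), abs_of_nonneg (by linarith : 0 ≤ d + 1 / 2),
        abs_of_nonneg h0]
      norm_num
    · right
      rw [habs (by linarith) (by linarith), abs_of_nonneg (by linarith : 0 ≤ d + -1 / 2),
        abs_of_nonneg h0]
      norm_num

lemma abs_sub_sum_abs_le_abs_sum_range_succ (g : ℕ → ℝ) (m : ℕ) :
    |g m| - ∑ k ∈ range m, |g k| ≤ |∑ k ∈ range (m + 1), g k| := by
  rw [sum_range_succ]
  have h := abs_sub (∑ k ∈ range m, g k + g m) (∑ k ∈ range m, g k)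
  rw [add_sub_cancel_left] at h
  linarith [abs_sum_le_sum_abs g (range m)]

lemma div_mul_pow_le_pow_sub_geom_sum {L : ℝ} (hL : 1 < L) (m : ℕ) :
    (L - 2) / (L - 1) * L ^ m ≤ L ^ m - ∑ k ∈ range m, L ^ k := by
  rw [geom_sum_eq hL.ne', div_mul_eq_mul_div, le_sub_iff_add_le, ← add_div,
    div_le_iff₀ (by linarith)]
  linarith

lemma le_intervalIntegral_of_le_or_le_sub {f : ℝ → ℝ} {a b c t : ℝ} (hf : Continuous f)
    (hf0 : ∀ x, 0 ≤ f x) (hc : 0 ≤ c) (ht : 0 ≤ t) (hab : a ≤ b)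
    (hcover : ∀ x, c ≤ f x ∨ c ≤ f (x - t)) :
    c * (b - a - t) / 2 ≤ ∫ x in a..b, f x := by
  set g : ℝ → ℝ := fun x => min (f x) c
  have hg : Continuous g := hf.min continuous_const
  have hint (u v : ℝ) : IntervalIntegrable g MeasureTheory.volume u v := hg.intervalIntegrable u v
  have hg0 (x : ℝ) : 0 ≤ g x := le_min (hf0 x) hc
  have hgc (x : ℝ) : g x ≤ c := min_le_right _ _
  have hpair : c * (b - a) ≤ (∫ x in a..b, g x) + ∫ x in a..b, g (x - t) := by
    have hsum (x : ℝ) : c ≤ g x + g (x - t) := by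
      rcases hcover x with hx | hx
      · linarith [min_eq_right hx, hg0 (x - t)]
      · linarith [min_eq_right hx, hg0 x]
    have hgs : Continuous fun x => g (x - t) := hg.comp (continuous_sub_right t)
    rw [← intervalIntegral.integral_add (hint a b) (hgs.intervalIntegrable a b)]
    calc c * (b - a) = ∫ _ in a..b, c := by simp [mul_comm]
      _ ≤ _ := intervalIntegral.integral_mono_on hab intervalIntegrable_const
          ((hg.add hgs).intervalIntegrable a b) fun x _ => hsum x
  have hshift : ∫ x in a..b, g (x - t) ≤ c * t + ∫ x in a..b, g x := by
    rw [intervalIntegral.integral_comp_sub_right,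
      ← intervalIntegral.integral_add_adjacent_intervals (hint (a - t) a) (hint a (b - t)),
      ← intervalIntegral.integral_add_adjacent_intervals (hint a (b - t)) (hint (b - t) b)]
    have hleft : ∫ x in a - t..a, g x ≤ c * t := by
      calc ∫ x in a - t..a, g x ≤ ∫ _ in a - t..a, c :=
            intervalIntegral.integral_mono_on (by linarith) (hint _ _) intervalIntegrable_const
              fun x _ => hgc x
        _ = c * t := by simp [mul_comm]
    have hright : 0 ≤ ∫ x in b - t..b, g x :=
      intervalIntegral.integral_nonneg (by linarith) fun x _ => hg0 x
    linarith
  have hgf : ∫ x in a..b, g x ≤ ∫ x in a..b, f x :=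
    intervalIntegral.integral_mono_on hab (hint a b) (hf.intervalIntegrable a b) fun x _ =>
      min_le_left _ _
  linarith

noncomputable def knopp (r : ℝ) (b : ℕ) (x : ℝ) : ℝ := ∑' k : ℕ, r ^ k * phi (b ^ k * x)

lemma Kfun_eq_knopp (α : ℝ) (ν : ℕ) : Kfun α ν = knopp ((2 : ℝ) ^ (-(2 * α * ν))) (4 ^ ν) := by
  ext x
  refine tsum_congr fun k => ?_
  rw [← Real.rpow_natCast _ k, ← Real.rpow_mul zero_le_two]
  push_cast
  rw [show (4 : ℝ) = 2 ^ 2 by norm_num, ← pow_mul, ← pow_mul]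
  ring_nf

section Knopp

variable {r : ℝ} {b : ℕ}

lemma summable_knopp_term (hr0 : 0 ≤ r) (hr1 : r < 1) (x : ℝ) :
    Summable fun k : ℕ => r ^ k * phi (b ^ k * x) :=
  (summable_geometric_of_lt_one hr0 hr1).of_nonneg_of_le
    (fun k => mul_nonneg (pow_nonneg hr0 k) (phi_nonneg _))
    (fun k => mul_le_of_le_one_right (pow_nonneg hr0 k) (phi_le_one _))

lemma continuous_knopp (hr0 : 0 ≤ r) (hr1 : r < 1) : Continuous (knopp r b) :=
  continuous_tsum
    (fun k => continuous_const.mul (lipschitzWith_one_phi.continuous.comp (continuous_const_mul _)))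
    (summable_geometric_of_lt_one hr0 hr1) fun k x => by
      rw [norm_mul, norm_pow, Real.norm_of_nonneg hr0, Real.norm_of_nonneg (phi_nonneg _)]
      exact mul_le_of_le_one_right (pow_nonneg hr0 k) (phi_le_one _)

noncomputable def knoppStep (b m : ℕ) : ℝ := (2 * (b : ℝ) ^ m)⁻¹

lemma knoppStep_pos (hb0 : b ≠ 0) (m : ℕ) : 0 < knoppStep b m := by
  rw [knoppStep]; positivity

lemma knoppStep_le_half (hb0 : b ≠ 0) (m : ℕ) : knoppStep b m ≤ 1 / 2 := by
  rw [knoppStep, one_div]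
  gcongr
  exact le_mul_of_one_le_right zero_le_two
    (one_le_pow₀ (by exact_mod_cast Nat.one_le_iff_ne_zero.2 hb0))

lemma phi_pow_mul_add_intCast_mul_knoppStep (hb : 4 ∣ b) (hb0 : b ≠ 0) {m k : ℕ} (hmk : m < k)
    (x : ℝ) (n : ℤ) : phi (b ^ k * (x + n * knoppStep b m)) = phi (b ^ k * x) := by
  obtain ⟨c, rfl⟩ := hb
  obtain ⟨j, rfl⟩ := Nat.exists_eq_add_of_lt hmk
  have hc : (c : ℝ) ≠ 0 := by exact_mod_cast right_ne_zero_of_mul hb0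
  convert phi_add_two_mul_intCast ((4 * c : ℕ) ^ (m + j + 1) * x) (n * c * (4 * c) ^ j) using 2
  rw [knoppStep]
  push_cast
  field_simp
  ring

lemma le_abs_knopp_sub_div_of_half_step (hb : 4 ∣ b) (hr0 : 0 ≤ r) (hr1 : r < 1)
    (hL : 2 < b * r) (m : ℕ) (x : ℝ) {ε : ℤ} (hε : |ε| = 1)
    (hstep : |phi (b ^ m * x + ε / 2) - phi (b ^ m * x)| = 1 / 2) :
    (b * r - 2) / (b * r - 1) * (b * r) ^ m ≤
      |(knopp r b (x + ε * knoppStep b m) - knopp r b x) / knoppStep b m| := by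
  have hb0 : b ≠ 0 := by rintro rfl; simp at hL; linarith
  set t := knoppStep b m with ht
  have htpos : 0 < t := knoppStep_pos hb0 m
  set g : ℕ → ℝ := fun k => r ^ k * (phi (b ^ k * (x + ε * t)) - phi (b ^ k * x))
  have htail : ∀ k ∉ range (m + 1), g k = 0 := fun k hk => by
    rw [mem_range, not_lt] at hk
    simp only [g]
    rw [phi_pow_mul_add_intCast_mul_knoppStep hb hb0 (by omega), sub_self, mul_zero]
  have hsum : knopp r b (x + ε * t) - knopp r b x = ∑ k ∈ range (m + 1), g k := by
    rw [knopp, knopp, ← (summable_knopp_term hr0 hr1 (x + ε * t)).tsum_sub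
      (summable_knopp_term hr0 hr1 x)]
    simp_rw [← mul_sub]
    exact tsum_eq_sum htail
  have hscale (k : ℕ) : r ^ k * (b ^ k * t) = (b * r) ^ k * t := by ring
  have hgm : |g m| = (b * r) ^ m * t := by
    have : (b : ℝ) ^ m * (x + ε * t) = b ^ m * x + ε / 2 := by
      rw [ht, knoppStep]; field_simp
    simp only [g]
    rw [this, abs_mul, hstep, abs_of_nonneg (pow_nonneg hr0 m), ← hscale, ht, knoppStep]
    field_simp
  have hgk (k : ℕ) : |g k| ≤ (b * r) ^ k * t := by
    rw [← hscale, abs_mul, abs_of_nonneg (pow_nonneg hr0 k)]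
    gcongr
    calc |phi (b ^ k * (x + ε * t)) - phi (b ^ k * x)|
        ≤ |b ^ k * (x + ε * t) - b ^ k * x| := by
          simpa [Real.dist_eq] using lipschitzWith_one_phi.dist_le_mul (b ^ k * (x + ε * t)) _
      _ = b ^ k * t := by
          rw [← mul_sub, add_sub_cancel_left, abs_mul, abs_mul, abs_of_pos htpos,
            show |(ε : ℝ)| = 1 by exact_mod_cast hε, one_mul, abs_of_nonneg (by positivity)]
  rw [abs_div, abs_of_pos htpos, le_div_iff₀ htpos, hsum]
  calc (b * r - 2) / (b * r - 1) * (b * r) ^ m * t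
      ≤ ((b * r) ^ m - ∑ k ∈ range m, (b * r) ^ k) * t := by
        gcongr; exact div_mul_pow_le_pow_sub_geom_sum (by linarith) m
    _ ≤ |g m| - ∑ k ∈ range m, |g k| := by
        rw [sub_mul, sum_mul, hgm]; gcongr with k; exact hgk k
    _ ≤ _ := abs_sub_sum_abs_le_abs_sum_range_succ g m

noncomputable def knoppDiffQuot (r : ℝ) (b m : ℕ) (x : ℝ) : ℝ :=
  |(knopp r b (x + knoppStep b m) - knopp r b x) / knoppStep b m|

lemma continuous_knoppDiffQuot (hr0 : 0 ≤ r) (hr1 : r < 1) (m : ℕ) :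
    Continuous (knoppDiffQuot r b m) :=
  ((((continuous_knopp hr0 hr1).comp (continuous_add_const _)).sub
    (continuous_knopp hr0 hr1)).div_const _).abs

lemma le_knoppDiffQuot_or_le_knoppDiffQuot_sub (hb : 4 ∣ b) (hr0 : 0 ≤ r) (hr1 : r < 1)
    (hL : 2 < b * r) (m : ℕ) (x : ℝ) :
    (b * r - 2) / (b * r - 1) * (b * r) ^ m ≤ knoppDiffQuot r b m x ∨
      (b * r - 2) / (b * r - 1) * (b * r) ^ m ≤ knoppDiffQuot r b m (x - knoppStep b m) := by
  rcases abs_phi_add_half_sub_phi_or (b ^ m * x) with h | h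
  · left
    simpa [knoppDiffQuot] using
      le_abs_knopp_sub_div_of_half_step hb hr0 hr1 hL m x (ε := 1) rfl (by simpa using h)
  · right
    rw [knoppDiffQuot, sub_add_cancel, ← abs_neg, ← neg_div, neg_sub]
    simpa [← sub_eq_add_neg] using
      le_abs_knopp_sub_div_of_half_step hb hr0 hr1 hL m x (ε := -1) rfl (by simpa using h)

lemma le_average_knoppDiffQuot (hb : 4 ∣ b) (hr0 : 0 ≤ r) (hr1 : r < 1) (hL : 2 < b * r)
    (m : ℕ) {M : ℝ} (hM : knoppStep b m ≤ M) :
    1 / 4 * ((b * r - 2) / (b * r - 1) * (b * r) ^ m) ≤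
      1 / (2 * M) * ∫ x in -M..M, knoppDiffQuot r b m x := by
  have hb0 : b ≠ 0 := by rintro rfl; simp at hL; linarith
  set c := (b * r - 2) / (b * r - 1) * (b * r) ^ m
  have hc : 0 ≤ c := mul_nonneg (div_nonneg (by linarith) (by linarith)) (by positivity)
  have hstep := knoppStep_pos hb0 m
  have hint := le_intervalIntegral_of_le_or_le_sub (continuous_knoppDiffQuot hr0 hr1 m)
    (fun x => abs_nonneg _) hc hstep.le (by linarith : -M ≤ M)
    (le_knoppDiffQuot_or_le_knoppDiffQuot_sub hb hr0 hr1 hL m)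
  have hM0 : 0 < M := by linarith
  calc 1 / 4 * c = 1 / (2 * M) * (c * M / 2) := by field_simp; ring
    _ ≤ 1 / (2 * M) * (c * (M - -M - knoppStep b m) / 2) := by gcongr; linarith
    _ ≤ _ := by gcongr

end Knopp

lemma two_rpow_mul_one_sub_eq (α : ℝ) (ν : ℕ) :
    (2 : ℝ) ^ (2 * (ν : ℝ) * (1 - α)) = (4 ^ ν : ℕ) * (2 : ℝ) ^ (-(2 * α * ν)) := by
  rw [show 2 * (ν : ℝ) * (1 - α) = 2 * ν + -(2 * α * ν) by ring, Real.rpow_add two_pos,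
    Real.rpow_mul zero_le_two, Real.rpow_natCast]
  norm_num

lemma two_zpow_neg_eq_knoppStep (ν m : ℕ) :
    (2 : ℝ) ^ (-(2 * (ν : ℤ) * (m : ℤ) + 1)) = knoppStep (4 ^ ν) m := by
  rw [knoppStep, zpow_neg, show 2 * (ν : ℤ) * m + 1 = ((2 * ν * m + 1 : ℕ) : ℤ) by push_cast; ring,
    zpow_natCast, pow_succ, pow_mul, pow_mul]
  push_cast
  norm_num [mul_comm]

theorem Kfun_L1_difference_quotient_lower_bound (α : ℝ) (ν : ℕ)
    (hα : α ∈ Set.Ioo (0 : ℝ) 1) (hν : 1 / (1 - α) < 2 * (ν : ℝ)) (M : ℝ) (hM : 1 ≤ M)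
    (m : ℕ) :
    (1 / (2 * M)) * ∫ x in (-M)..M,
        |(Kfun α ν (x + (2 : ℝ) ^ (-(2 * (ν : ℤ) * (m : ℤ) + 1)) ) - Kfun α ν x)
          / (2 : ℝ) ^ (-(2 * (ν : ℤ) * (m : ℤ) + 1))| ≥
      (1 / 4) * (((2 : ℝ) ^ (2 * (ν : ℝ) * (1 - α)) - 2)
          / ((2 : ℝ) ^ (2 * (ν : ℝ) * (1 - α)) - 1))
        * ((2 : ℝ) ^ (2 * (ν : ℝ) * (1 - α))) ^ m := by
  obtain ⟨hα0, hα1⟩ := hα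
  have hνα : 1 < 2 * ν * (1 - α) := by rwa [div_lt_iff₀ (by linarith)] at hν
  have hν0 : 0 < ν := Nat.pos_of_ne_zero fun h => by subst h; norm_num at hνα
  have hL : 2 < ((4 ^ ν : ℕ) : ℝ) * (2 : ℝ) ^ (-(2 * α * ν)) := by
    rw [← two_rpow_mul_one_sub_eq]
    calc (2 : ℝ) = 2 ^ (1 : ℝ) := (Real.rpow_one 2).symm
      _ < _ := Real.rpow_lt_rpow_of_exponent_lt one_lt_two hνα
  rw [two_rpow_mul_one_sub_eq, two_zpow_neg_eq_knoppStep, Kfun_eq_knopp, ge_iff_le, mul_assoc]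
  have hr1 : (2 : ℝ) ^ (-(2 * α * ν)) < 1 :=
    Real.rpow_lt_one_of_one_lt_of_neg one_lt_two (by nlinarith [(Nat.cast_pos.2 hν0 : (0 : ℝ) < ν)])
  refine le_average_knoppDiffQuot (dvd_pow_self 4 hν0.ne') (by positivity) hr1 hL m ?_
  linarith [knoppStep_le_half (b := 4 ^ ν) (by positivity) m]
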